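/- For every integer j ≥ 1, every integer n with 0 ≤ n ≤ j−1, and every integer x with 0 ≤ x ≤ j−1, the following identity of terminating hypergeometric series holds: ((j²−n²)/j)·₃F₂(−n, n, −x; 1/2, −j+1; 1) = (x+1/2)·₃F₂(−n, n, −x−1; 1/2, −j; 1) − (x−j+1/2)·₃F₂(−n, n, −x; 1/2, −j; 1). -/
import Mathlib


/-- The Pochhammer symbol `(a)_k = a (a+1) ⋯ (a+k-1)`. -/
noncomputable def poch (a : ℝ) (k : ℕ) : ℝ := ∏ i ∈ Finset.range k, (a + i)

/-- The terminating hypergeometric series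
`₃F₂(−n, a, b; c, d; 1) = ∑_{k=0}^n (−n)_k (a)_k (b)_k / ((c)_k (d)_k k!)`. -/
noncomputable def hyp3F2 (n : ℕ) (a b c d : ℝ) : ℝ :=
  ∑ k ∈ Finset.range (n + 1),
    poch (-(n : ℝ)) k * poch a k * poch b k / (poch c k * poch d k * (Nat.factorial k : ℝ))

lemma poch_zero (a : ℝ) : poch a 0 = 1 := by simp [poch]

lemma poch_succ (a : ℝ) (k : ℕ) : poch a (k + 1) = poch a k * (a + k) := by
  simp [poch, Finset.prod_range_succ]

lemma poch_succ' (a : ℝ) (k : ℕ) : poch a (k + 1) = a * poch (a + 1) k := by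
  rw [poch, Finset.prod_range_succ']
  simp only [Nat.cast_zero, add_zero, mul_comm]
  congr 1
  apply Finset.prod_congr rfl
  intro i _
  push_cast
  ring

lemma poch_half_pos (k : ℕ) : 0 < poch (1/2) k := by
  apply Finset.prod_pos
  intro i _
  positivity

lemma poch_neg_ne_zero {j : ℝ} {k : ℕ} (h : ∀ i : ℕ, i < k → (-j + 1 + i) ≠ 0) :
    poch (-j + 1) k ≠ 0 := by
  rw [poch]
  apply Finset.prod_ne_zero_iff.mpr
  intro i hi
  exact h i (Finset.mem_range.mp hi)

set_option maxHeartbeats 2000000 in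
theorem stmt3 (j n x : ℕ) (hj : 1 ≤ j) (hn : n ≤ j - 1) (hx : x ≤ j - 1) :
    (((j : ℝ) ^ 2 - (n : ℝ) ^ 2) / (j : ℝ)) *
        hyp3F2 n (n : ℝ) (-(x : ℝ)) (1/2) (-(j : ℝ) + 1)
      = ((x : ℝ) + 1/2) * hyp3F2 n (n : ℝ) (-(x : ℝ) - 1) (1/2) (-(j : ℝ))
        - ((x : ℝ) - (j : ℝ) + 1/2) * hyp3F2 n (n : ℝ) (-(x : ℝ)) (1/2) (-(j : ℝ)) := by
  have hnj : n < j := lt_of_le_of_lt hn (Nat.sub_lt hj one_pos)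
  have hj0 : (j : ℝ) ≠ 0 := by positivity
  -- the telescoping certificate
  set g : ℕ → ℝ := fun k =>
    match k with
    | 0 => 0
    | Nat.succ m => ((m : ℝ) ^ 2 - (n : ℝ) ^ 2) / (j : ℝ) *
        (poch (-(n : ℝ)) m * poch (n : ℝ) m * poch (-(x : ℝ)) m /
          (poch (1/2) m * poch (-(j : ℝ) + 1) m * (Nat.factorial m : ℝ))) with hg
  rw [hyp3F2, hyp3F2, hyp3F2, Finset.mul_sum, Finset.mul_sum, Finset.mul_sum,
    ← Finset.sum_sub_distrib, ← sub_eq_zero, ← Finset.sum_sub_distrib]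
  have key : ∀ k ∈ Finset.range (n + 1),
      (((j : ℝ) ^ 2 - (n : ℝ) ^ 2) / (j : ℝ) *
          (poch (-(n : ℝ)) k * poch ((n : ℝ)) k * poch (-(x : ℝ)) k /
            (poch (1/2) k * poch (-(j : ℝ) + 1) k * (Nat.factorial k : ℝ)))
        - (((x : ℝ) + 1/2) *
            (poch (-(n : ℝ)) k * poch ((n : ℝ)) k * poch (-(x : ℝ) - 1) k /
              (poch (1/2) k * poch (-(j : ℝ)) k * (Nat.factorial k : ℝ)))
          - ((x : ℝ) - (j : ℝ) + 1/2) *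
            (poch (-(n : ℝ)) k * poch ((n : ℝ)) k * poch (-(x : ℝ)) k /
              (poch (1/2) k * poch (-(j : ℝ)) k * (Nat.factorial k : ℝ)))))
      = g (k + 1) - g k := by
    intro k hk
    have hkn : k ≤ n := Nat.lt_succ_iff.mp (Finset.mem_range.mp hk)
    match k with
    | 0 =>
      simp only [hg, poch_zero, Nat.factorial_zero, Nat.cast_zero, Nat.cast_one]
      field_simp
      ring
    | Nat.succ m =>
      have hm : m + 1 ≤ n := hkn
      have hE : poch (-(j : ℝ) + 1) m ≠ 0 := by
        apply poch_neg_ne_zero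
        intro i hi
        have : (i : ℝ) < (j : ℝ) - 1 := by
          have : i + 1 < j := by omega
          have := (Nat.cast_lt (α := ℝ)).mpr this
          push_cast at this ⊢
          linarith
        intro h
        linarith
      have hD : poch (1/2 : ℝ) m ≠ 0 := ne_of_gt (poch_half_pos m)
      have hF : (Nat.factorial m : ℝ) ≠ 0 := Nat.cast_ne_zero.mpr (Nat.factorial_ne_zero m)
      have hmj : ((m : ℝ) + 1) - (j : ℝ) ≠ 0 := by
        have : m + 1 < j := lt_of_le_of_lt hm hnj
        have := (Nat.cast_lt (α := ℝ)).mpr this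
        push_cast at this
        intro h
        linarith
      have hm1 : ((m : ℝ) + 1) ≠ 0 := by positivity
      have hmhalf : ((m : ℝ) + 1/2) ≠ 0 := by positivity
      have hE' : poch (1 - (j : ℝ)) m ≠ 0 := by
        rw [show (1 : ℝ) - (j : ℝ) = -(j : ℝ) + 1 by ring]; exact hE
      have hA : (1/2 + (m : ℝ)) ≠ 0 := by positivity
      have hB : (-(j : ℝ) + 1 + (m : ℝ)) ≠ 0 := by
        intro h; apply hmj; linarith
      have hB' : (1 - (j : ℝ) + (m : ℝ)) ≠ 0 := by
        intro h; apply hmj; linarith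
      have hB'' : ((m : ℝ) + 1 - (j : ℝ)) ≠ 0 := hmj
      have hm1' : (1 + (m : ℝ)) ≠ 0 := by positivity
      have e1 : poch (-(n : ℝ)) (m + 1) = poch (-(n : ℝ)) m * (-(n : ℝ) + m) := poch_succ _ _
      have e2 : poch ((n : ℝ)) (m + 1) = poch ((n : ℝ)) m * ((n : ℝ) + m) := poch_succ _ _
      have e3 : poch (-(x : ℝ)) (m + 1) = poch (-(x : ℝ)) m * (-(x : ℝ) + m) := poch_succ _ _
      have e4 : poch (1/2 : ℝ) (m + 1) = poch (1/2 : ℝ) m * (1/2 + m) := poch_succ _ _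
      have e5 : poch (-(j : ℝ) + 1) (m + 1) = poch (-(j : ℝ) + 1) m * (-(j : ℝ) + 1 + m) :=
        poch_succ _ _
      have e6 : poch (-(x : ℝ) - 1) (m + 1) = (-(x : ℝ) - 1) * poch (-(x : ℝ)) m := by
        rw [poch_succ']
        congr 2
        ring
      have e7 : poch (-(j : ℝ)) (m + 1) = (-(j : ℝ)) * poch (-(j : ℝ) + 1) m := poch_succ' _ _
      have e8 : ((Nat.factorial (m + 1) : ℝ)) = ((m : ℝ) + 1) * (Nat.factorial m : ℝ) := by
        rw [Nat.factorial_succ]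
        push_cast
        ring
      simp only [hg, Nat.cast_succ, e1, e2, e3, e4, e5, e6, e7, e8]
      field_simp
      ring
  rw [Finset.sum_congr rfl key, Finset.sum_range_sub g (n + 1)]
  simp [hg]
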